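/- arXiv:math/0605641 — 5 statements merged into one kernel-verified Lean document; each statement's English description precedes it below -/
import Mathlib

section
/- Let S be a finite set, let μ be a monotone probability measure on {0,1}^S assigning positive probability to every configuration, and let ε ∈ (0,1). Then for every s ∈ S and every ξ ∈ {0,1}^{S∖{s}} one has μ^{(-,ε)}(σ(s)=1 | σ ≡ ξ on S∖{s}) ≥ (1-ε)·μ(σ(s)=1 | σ ≡ ξ on S∖{s}), and μ^{(+,ε)}(σ(s)=0 | σ ≡ ξ on S∖{s}) ≥ (1-ε)·μ(σ(s)=0 | σ ≡ ξ on S∖{s}). -/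
/-!
Statement 0 (Lemma 3.1 of Broman–Steif): for a monotone, fully supported probability
measure `μ` on `{0,1}^S` (`S` finite) and `ε ∈ (0,1)`, the conditional probabilities
of the downward (resp. upward) `ε`-perturbation satisfy
`μ^{(-,ε)}(1|ξ) ≥ (1-ε) μ(1|ξ)` and `μ^{(+,ε)}(0|ξ) ≥ (1-ε) μ(0|ξ)`.

Configurations on a finite set `S` are functions `S → Bool` (`true` = 1, `false` = 0),
probability measures are represented by their weight functions.
-/

open Finset

variable {S : Type*} [Fintype S] [DecidableEq S]

/-- `μ` is a probability weight assigning positive probability to every configuration. -/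
def IsProbWeight (μ : (S → Bool) → ℝ) : Prop :=
  (∀ σ, 0 < μ σ) ∧ ∑ σ : S → Bool, μ σ = 1

/-- The conditional probability `μ(σ(s) = 1 | σ ≡ ξ off s)`. -/
noncomputable def condOne (μ : (S → Bool) → ℝ) (s : S) (ξ : S → Bool) : ℝ :=
  μ (Function.update ξ s true) /
    (μ (Function.update ξ s true) + μ (Function.update ξ s false))

/-- The conditional probability `μ(σ(s) = 0 | σ ≡ ξ off s)`. -/
noncomputable def condZero (μ : (S → Bool) → ℝ) (s : S) (ξ : S → Bool) : ℝ :=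
  μ (Function.update ξ s false) /
    (μ (Function.update ξ s true) + μ (Function.update ξ s false))

/-- `μ` is monotone: the conditional probability of a 1 at `s` is nondecreasing in the
configuration off `s`. -/
def IsMonotoneWeight (μ : (S → Bool) → ℝ) : Prop :=
  ∀ s : S, ∀ ξ ξ' : S → Bool, (∀ t, t ≠ s → ξ t ≤ ξ' t) →
    condOne μ s ξ ≤ condOne μ s ξ'

/-- The weight function of `μ^{(-,ε)}`: the law of `s ↦ min (X s) (Z s)` where `X ∼ μ`
and, independently, the `Z s` are i.i.d. with `P(Z s = 1) = 1 - ε`. -/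
noncomputable def minusEps (μ : (S → Bool) → ℝ) (ε : ℝ) : (S → Bool) → ℝ := fun η =>
  ∑ σ : S → Bool, μ σ *
    ∏ s : S, (if η s then (if σ s then 1 - ε else 0) else (if σ s then ε else 1))

/-- The weight function of `μ^{(+,ε)}`: the law of `s ↦ max (X s) (Z s)` where `X ∼ μ`
and, independently, the `Z s` are i.i.d. with `P(Z s = 1) = ε`. -/
noncomputable def plusEps (μ : (S → Bool) → ℝ) (ε : ℝ) : (S → Bool) → ℝ := fun η =>
  ∑ σ : S → Bool, μ σ *
    ∏ s : S, (if η s then (if σ s then 1 else ε) else (if σ s then 0 else 1 - ε))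

/- ------------------ auxiliary machinery ------------------- -/


noncomputable def BSkmin (ε : ℝ) : Bool → Bool → ℝ := fun a b =>
  if a then (if b then 1 - ε else 0) else (if b then ε else 1)

noncomputable def BSkplus (ε : ℝ) : Bool → Bool → ℝ := fun a b =>
  if a then (if b then 1 else ε) else (if b then 0 else 1 - ε)

/-- The off-`s` weight of a transition kernel. -/
noncomputable def BSw (k : Bool → Bool → ℝ) (s : S) (ξ σ : S → Bool) : ℝ :=
  ∏ t ∈ Finset.univ.erase s, k (ξ t) (σ t)

lemma BSprod_split (k : Bool → Bool → ℝ) (s : S) (b : Bool) (ξ σ : S → Bool) :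
    ∏ t : S, k (Function.update ξ s b t) (σ t) = k b (σ s) * BSw k s ξ σ := by
  rw [← Finset.mul_prod_erase Finset.univ _ (Finset.mem_univ s), Function.update_self]
  congr 1
  exact Finset.prod_congr rfl fun t ht => by
    rw [Function.update_of_ne (Finset.mem_erase.mp ht).1]

lemma BSminusEps_eq (μ : (S → Bool) → ℝ) (ε : ℝ) (s : S) (b : Bool) (ξ : S → Bool) :
    minusEps μ ε (Function.update ξ s b)
      = ∑ σ : S → Bool, μ σ * (BSkmin ε b (σ s) * BSw (BSkmin ε) s ξ σ) := by
  refine Finset.sum_congr rfl fun σ _ => ?_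
  rw [← BSprod_split (BSkmin ε) s b ξ σ]
  rfl

lemma BSplusEps_eq (μ : (S → Bool) → ℝ) (ε : ℝ) (s : S) (b : Bool) (ξ : S → Bool) :
    plusEps μ ε (Function.update ξ s b)
      = ∑ σ : S → Bool, μ σ * (BSkplus ε b (σ s) * BSw (BSkplus ε) s ξ σ) := by
  refine Finset.sum_congr rfl fun σ _ => ?_
  rw [← BSprod_split (BSkplus ε) s b ξ σ]
  rfl

lemma BSw_update (k : Bool → Bool → ℝ) (s : S) (ξ σ : S → Bool) (c : Bool) :
    BSw k s ξ (Function.update σ s c) = BSw k s ξ σ :=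
  Finset.prod_congr rfl fun t ht => by
    rw [Function.update_of_ne (Finset.mem_erase.mp ht).1]

def BSflip (s : S) : Equiv.Perm (S → Bool) :=
  Function.Involutive.toPerm (fun σ => Function.update σ s (!σ s)) (by
    intro σ; funext t
    by_cases h : t = s
    · subst h; simp
    · simp [Function.update_of_ne h])

lemma BSsum_flip (k : Bool → Bool → ℝ) (s : S) (μ : (S → Bool) → ℝ) (ξ : S → Bool) :
    ∑ σ : S → Bool, (if σ s then 0 else μ σ * BSw k s ξ σ)
      = ∑ σ : S → Bool, (if σ s then μ (Function.update σ s false) * BSw k s ξ σ else 0) := by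
  rw [← Equiv.sum_comp (BSflip s) (fun σ => if σ s then (0:ℝ) else μ σ * BSw k s ξ σ)]
  apply Finset.sum_congr rfl
  intro σ _
  show (if Function.update σ s (!σ s) s then (0:ℝ)
      else μ (Function.update σ s (!σ s)) * BSw k s ξ (Function.update σ s (!σ s))) = _
  by_cases hs : σ s = true
  · simp [hs, BSw_update]
  · simp at hs
    simp [hs, BSw_update]

/-- Cross inequality, minus version. -/
lemma BScross_minus (μ : (S → Bool) → ℝ) (hpos : ∀ σ, 0 < μ σ)
    (hmono : IsMonotoneWeight μ) (s : S) (ξ : S → Bool)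
    (w : (S → Bool) → ℝ) (hwnn : ∀ σ, 0 ≤ w σ)
    (hsupp : ∀ σ, w σ ≠ 0 → ∀ t, t ≠ s → ξ t ≤ σ t) :
    μ (Function.update ξ s true) *
      ∑ σ : S → Bool, (if σ s then μ (Function.update σ s false) * w σ else 0)
    ≤ μ (Function.update ξ s false) *
      ∑ σ : S → Bool, (if σ s then μ σ * w σ else 0) := by
  rw [Finset.mul_sum, Finset.mul_sum]
  apply Finset.sum_le_sum
  intro σ _
  by_cases hs : σ s = true
  · simp only [hs, if_true]
    rcases eq_or_ne (w σ) 0 with h0 | hne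
    · rw [h0]; simp
    · have hle := hsupp σ hne
      have hm := hmono s ξ σ hle
      have hupd : Function.update σ s true = σ := by
        rw [← hs]; exact Function.update_eq_self s σ
      unfold condOne at hm
      rw [hupd] at hm
      have h1 : 0 < μ (Function.update ξ s true) + μ (Function.update ξ s false) :=
        add_pos (hpos _) (hpos _)
      have h2 : 0 < μ σ + μ (Function.update σ s false) := add_pos (hpos _) (hpos _)
      rw [div_le_div_iff₀ h1 h2] at hm
      nlinarith [mul_le_mul_of_nonneg_right hm (hwnn σ)]
  · simp [hs]

/-- Cross inequality, plus version. -/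
lemma BScross_plus (μ : (S → Bool) → ℝ) (hpos : ∀ σ, 0 < μ σ)
    (hmono : IsMonotoneWeight μ) (s : S) (ξ : S → Bool)
    (w : (S → Bool) → ℝ) (hwnn : ∀ σ, 0 ≤ w σ)
    (hsupp : ∀ σ, w σ ≠ 0 → ∀ t, t ≠ s → σ t ≤ ξ t) :
    μ (Function.update ξ s false) *
      ∑ σ : S → Bool, (if σ s then μ σ * w σ else 0)
    ≤ μ (Function.update ξ s true) *
      ∑ σ : S → Bool, (if σ s then μ (Function.update σ s false) * w σ else 0) := by
  rw [Finset.mul_sum, Finset.mul_sum]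
  apply Finset.sum_le_sum
  intro σ _
  by_cases hs : σ s = true
  · simp only [hs, if_true]
    rcases eq_or_ne (w σ) 0 with h0 | hne
    · rw [h0]; simp
    · have hle := hsupp σ hne
      have hm := hmono s σ ξ hle
      have hupd : Function.update σ s true = σ := by
        rw [← hs]; exact Function.update_eq_self s σ
      unfold condOne at hm
      rw [hupd] at hm
      have h1 : 0 < μ (Function.update ξ s true) + μ (Function.update ξ s false) :=
        add_pos (hpos _) (hpos _)
      have h2 : 0 < μ σ + μ (Function.update σ s false) := add_pos (hpos _) (hpos _)
      rw [div_le_div_iff₀ h2 h1] at hm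
      nlinarith [mul_le_mul_of_nonneg_right hm (hwnn σ)]
  · simp [hs]

/-- The minus half. -/
lemma BSminus_side (μ : (S → Bool) → ℝ) (hpos : ∀ σ, 0 < μ σ)
    (hmono : IsMonotoneWeight μ) (ε : ℝ) (hε0 : 0 < ε) (hε1 : ε < 1)
    (s : S) (ξ : S → Bool) :
    (1 - ε) * condOne μ s ξ ≤ condOne (minusEps μ ε) s ξ := by
  have hwnn : ∀ σ, 0 ≤ BSw (BSkmin ε) s ξ σ := by
    intro σ
    apply Finset.prod_nonneg
    intro t _
    rcases ξ t <;> rcases σ t <;> simp [BSkmin] <;> linarith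
  have hsupp : ∀ σ, BSw (BSkmin ε) s ξ σ ≠ 0 → ∀ t, t ≠ s → ξ t ≤ σ t := by
    intro σ hne t hts
    cases hxt : ξ t
    · simp
    · cases hyt : σ t
      · exact absurd (Finset.prod_eq_zero
          (Finset.mem_erase.mpr ⟨hts, Finset.mem_univ t⟩)
          (by simp [BSkmin, hxt, hyt])) hne
      · simp
  have hwxi : 0 < BSw (BSkmin ε) s ξ ξ := by
    apply Finset.prod_pos
    intro t _
    rcases ξ t <;> simp [BSkmin] <;> linarith
  set F : ℝ := ∑ σ : S → Bool, (if σ s then μ σ * BSw (BSkmin ε) s ξ σ else 0) with hF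
  set G : ℝ := ∑ σ : S → Bool, (if σ s then 0 else μ σ * BSw (BSkmin ε) s ξ σ) with hG
  have hFpos : 0 < F := by
    rw [hF]
    apply Finset.sum_pos'
    · intro σ _
      split
      · exact mul_nonneg (hpos σ).le (hwnn σ)
      · exact le_refl 0
    · refine ⟨Function.update ξ s true, Finset.mem_univ _, ?_⟩
      simp only [Function.update_self, if_true, BSw_update]
      exact mul_pos (hpos _) hwxi
  have hGpos : 0 < G := by
    rw [hG]
    apply Finset.sum_pos'
    · intro σ _
      split
      · exact le_refl 0
      · exact mul_nonneg (hpos σ).le (hwnn σ)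
    · refine ⟨Function.update ξ s false, Finset.mem_univ _, ?_⟩
      simp only [Function.update_self, Bool.false_eq_true, if_false, BSw_update]
      exact mul_pos (hpos _) hwxi
  have hA : minusEps μ ε (Function.update ξ s true) = (1 - ε) * F := by
    rw [BSminusEps_eq, hF, Finset.mul_sum]
    apply Finset.sum_congr rfl
    intro σ _
    by_cases hs : σ s = true
    · simp only [hs, if_true, BSkmin]; ring
    · simp at hs; simp [hs, BSkmin]
  have hB : minusEps μ ε (Function.update ξ s false) = ε * F + G := by
    rw [BSminusEps_eq, hF, hG, Finset.mul_sum, ← Finset.sum_add_distrib]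
    apply Finset.sum_congr rfl
    intro σ _
    by_cases hs : σ s = true
    · simp [hs, BSkmin]; try ring
    · simp at hs; simp [hs, BSkmin]
  have hcross : μ (Function.update ξ s true) * G ≤ μ (Function.update ξ s false) * F := by
    rw [hG, BSsum_flip]
    exact BScross_minus μ hpos hmono s ξ _ hwnn hsupp
  unfold condOne
  rw [hA, hB]
  have hden : (1 - ε) * F + (ε * F + G) = F + G := by ring
  rw [hden, ← mul_div_assoc]
  rw [div_le_div_iff₀ (add_pos (hpos _) (hpos _)) (add_pos hFpos hGpos)]
  nlinarith [mul_le_mul_of_nonneg_left hcross (by linarith : (0:ℝ) ≤ 1 - ε)]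

/-- The plus half. -/
lemma BSplus_side (μ : (S → Bool) → ℝ) (hpos : ∀ σ, 0 < μ σ)
    (hmono : IsMonotoneWeight μ) (ε : ℝ) (hε0 : 0 < ε) (hε1 : ε < 1)
    (s : S) (ξ : S → Bool) :
    (1 - ε) * condZero μ s ξ ≤ condZero (plusEps μ ε) s ξ := by
  have hwnn : ∀ σ, 0 ≤ BSw (BSkplus ε) s ξ σ := by
    intro σ
    apply Finset.prod_nonneg
    intro t _
    rcases ξ t <;> rcases σ t <;> simp [BSkplus] <;> linarith
  have hsupp : ∀ σ, BSw (BSkplus ε) s ξ σ ≠ 0 → ∀ t, t ≠ s → σ t ≤ ξ t := by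
    intro σ hne t hts
    cases hxt : ξ t
    · cases hyt : σ t
      · simp
      · exact absurd (Finset.prod_eq_zero
          (Finset.mem_erase.mpr ⟨hts, Finset.mem_univ t⟩)
          (by simp [BSkplus, hxt, hyt])) hne
    · simp
  have hwxi : 0 < BSw (BSkplus ε) s ξ ξ := by
    apply Finset.prod_pos
    intro t _
    rcases ξ t <;> simp [BSkplus] <;> linarith
  set F : ℝ := ∑ σ : S → Bool, (if σ s then μ σ * BSw (BSkplus ε) s ξ σ else 0) with hF
  set G : ℝ := ∑ σ : S → Bool, (if σ s then 0 else μ σ * BSw (BSkplus ε) s ξ σ) with hG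
  have hFpos : 0 < F := by
    rw [hF]
    apply Finset.sum_pos'
    · intro σ _
      split
      · exact mul_nonneg (hpos σ).le (hwnn σ)
      · exact le_refl 0
    · refine ⟨Function.update ξ s true, Finset.mem_univ _, ?_⟩
      simp only [Function.update_self, if_true, BSw_update]
      exact mul_pos (hpos _) hwxi
  have hGpos : 0 < G := by
    rw [hG]
    apply Finset.sum_pos'
    · intro σ _
      split
      · exact le_refl 0
      · exact mul_nonneg (hpos σ).le (hwnn σ)
    · refine ⟨Function.update ξ s false, Finset.mem_univ _, ?_⟩
      simp only [Function.update_self, Bool.false_eq_true, if_false, BSw_update]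
      exact mul_pos (hpos _) hwxi
  have hA : plusEps μ ε (Function.update ξ s true) = F + ε * G := by
    rw [BSplusEps_eq, hF, hG, Finset.mul_sum, ← Finset.sum_add_distrib]
    apply Finset.sum_congr rfl
    intro σ _
    by_cases hs : σ s = true
    · simp only [hs, if_true, BSkplus]; ring
    · simp at hs; simp [hs, BSkplus]; ring
  have hB : plusEps μ ε (Function.update ξ s false) = (1 - ε) * G := by
    rw [BSplusEps_eq, hG, Finset.mul_sum]
    apply Finset.sum_congr rfl
    intro σ _
    by_cases hs : σ s = true
    · simp [hs, BSkplus]; try ring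
    · simp at hs; simp [hs, BSkplus]; try ring
  have hcross : μ (Function.update ξ s false) * F ≤ μ (Function.update ξ s true) * G := by
    rw [hG, BSsum_flip]
    exact BScross_plus μ hpos hmono s ξ _ hwnn hsupp
  unfold condZero
  rw [hA, hB]
  have hden : (F + ε * G) + (1 - ε) * G = F + G := by ring
  rw [hden, ← mul_div_assoc]
  rw [div_le_div_iff₀ (add_pos (hpos _) (hpos _)) (add_pos hFpos hGpos)]
  nlinarith [mul_le_mul_of_nonneg_left hcross (by linarith : (0:ℝ) ≤ 1 - ε)]

theorem lemma31 (μ : (S → Bool) → ℝ) (hμ : IsProbWeight μ)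
    (hmono : IsMonotoneWeight μ) (ε : ℝ) (hε : ε ∈ Set.Ioo (0 : ℝ) 1)
    (s : S) (ξ : S → Bool) :
    (1 - ε) * condOne μ s ξ ≤ condOne (minusEps μ ε) s ξ ∧
    (1 - ε) * condZero μ s ξ ≤ condZero (plusEps μ ε) s ξ := by
  obtain ⟨hpos, -⟩ := hμ
  obtain ⟨hε0, hε1⟩ := hε
  exact ⟨BSminus_side μ hpos hmono ε hε0 hε1 s ξ,
         BSplus_side μ hpos hmono ε hε0 hε1 s ξ⟩
end

section
/- Let S be a finite set, let μ be a monotone probability measure on {0,1}^S assigning positive probability to every configuration, and let ε ∈ (0,1). Then μ^{(-,ε)} assigns positive probability to every configuration and is monotone. -/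
/-!
Statement 0 (Lemma 3.1 of Broman–Steif): for a monotone, fully supported probability
measure `μ` on `{0,1}^S` (`S` finite) and `ε ∈ (0,1)`, the conditional probabilities
of the downward (resp. upward) `ε`-perturbation satisfy
`μ^{(-,ε)}(1|ξ) ≥ (1-ε) μ(1|ξ)` and `μ^{(+,ε)}(0|ξ) ≥ (1-ε) μ(0|ξ)`.

Configurations on a finite set `S` are functions `S → Bool` (`true` = 1, `false` = 0),
probability measures are represented by their weight functions.
-/

open Finset

variable {S : Type*} [Fintype S] [DecidableEq S]

section BromanSteifAux

noncomputable def Kf (ε : ℝ) (a x : Bool) : ℝ :=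
  if a then (if x then 1 - ε else 0) else (if x then ε else 1)

lemma Kf_nonneg {ε : ℝ} (h0 : 0 ≤ ε) (h1 : ε ≤ 1) (a x : Bool) : 0 ≤ Kf ε a x := by
  rcases a <;> rcases x <;> simp [Kf] <;> linarith

lemma Kf_lattice {ε : ℝ} (h0 : 0 ≤ ε) (h1 : ε ≤ 1) (a b x y : Bool) :
    Kf ε a x * Kf ε b y ≤ Kf ε (a ⊓ b) (x ⊓ y) * Kf ε (a ⊔ b) (x ⊔ y) := by
  rcases a <;> rcases b <;> rcases x <;> rcases y <;> simp [Kf] <;> nlinarith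

lemma minusEps_eq (μ : (S → Bool) → ℝ) (ε : ℝ) (η : S → Bool) :
    minusEps μ ε η = ∑ σ : S → Bool, μ σ * ∏ s, Kf ε (η s) (σ s) := rfl

lemma cross_of_condOne {μ : (S → Bool) → ℝ} (hpos : ∀ σ, 0 < μ σ) {s : S} {ξ ξ' : S → Bool}
    (h : condOne μ s ξ ≤ condOne μ s ξ') :
    μ (Function.update ξ s true) * μ (Function.update ξ' s false) ≤
      μ (Function.update ξ' s true) * μ (Function.update ξ s false) := by
  unfold condOne at h
  rw [div_le_div_iff₀ (add_pos (hpos _) (hpos _)) (add_pos (hpos _) (hpos _))] at h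
  nlinarith [hpos (Function.update ξ s true), hpos (Function.update ξ' s true)]

lemma condOne_of_cross {μ : (S → Bool) → ℝ} (hpos : ∀ σ, 0 < μ σ) {s : S} {ξ ξ' : S → Bool}
    (h : μ (Function.update ξ s true) * μ (Function.update ξ' s false) ≤
      μ (Function.update ξ' s true) * μ (Function.update ξ s false)) :
    condOne μ s ξ ≤ condOne μ s ξ' := by
  unfold condOne
  rw [div_le_div_iff₀ (add_pos (hpos _) (hpos _)) (add_pos (hpos _) (hpos _))]
  nlinarith [hpos (Function.update ξ s true), hpos (Function.update ξ' s true)]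

lemma lattice_of_monotone {μ : (S → Bool) → ℝ} (hpos : ∀ σ, 0 < μ σ)
    (hmono : IsMonotoneWeight μ) :
    ∀ σ τ : S → Bool, μ σ * μ τ ≤ μ (σ ⊓ τ) * μ (σ ⊔ τ) := by
  have key : ∀ n : ℕ, ∀ σ τ : S → Bool,
      (Finset.univ.filter (fun i => σ i = true ∧ τ i = false)).card = n →
      μ σ * μ τ ≤ μ (σ ⊓ τ) * μ (σ ⊔ τ) := by
    intro n
    induction n with
    | zero =>
      intro σ τ hc
      have hle : σ ≤ τ := by
        intro i
        by_contra hlt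
        have hi : σ i = true ∧ τ i = false := by
          rcases hσ : σ i <;> rcases hτ : τ i <;> simp [hσ, hτ] at hlt ⊢
        have : i ∈ Finset.univ.filter (fun i => σ i = true ∧ τ i = false) := by
          simp [hi.1, hi.2]
        rw [Finset.card_eq_zero] at hc
        simp [hc] at this
      rw [inf_eq_left.2 hle, sup_eq_right.2 hle]
    | succ n ih =>
      intro σ τ hc
      have hne : (Finset.univ.filter (fun i => σ i = true ∧ τ i = false)).Nonempty :=
        Finset.card_pos.1 (by rw [hc]; exact n.succ_pos)
      obtain ⟨s, hs⟩ := hne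
      rw [Finset.mem_filter] at hs
      obtain ⟨-, hs1, hs2⟩ := hs
      set τ₁ := Function.update τ s true with hτ₁
      have hcount : (Finset.univ.filter (fun i => σ i = true ∧ τ₁ i = false)).card = n := by
        have hset : Finset.univ.filter (fun i => σ i = true ∧ τ₁ i = false)
            = (Finset.univ.filter (fun i => σ i = true ∧ τ i = false)).erase s := by
          ext i
          by_cases hi : i = s
          · subst hi; simp [hτ₁, Function.update_self]
          · simp [hτ₁, Function.update_of_ne hi, hi]
        rw [hset, Finset.card_erase_of_mem (by simp [hs1, hs2]), hc]
        rfl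
      have IH := ih σ τ₁ hcount
      have e1 : σ ⊔ τ₁ = σ ⊔ τ := by
        funext i
        by_cases hi : i = s
        · subst hi; simp [hτ₁, Pi.sup_apply, Function.update_self, hs1]
        · simp [hτ₁, Pi.sup_apply, Function.update_of_ne hi]
      have e2 : σ ⊓ τ₁ = Function.update (σ ⊓ τ) s true := by
        funext i
        by_cases hi : i = s
        · subst hi; simp [hτ₁, Pi.inf_apply, Function.update_self, hs1]
        · simp [hτ₁, Pi.inf_apply, Function.update_of_ne hi]
      rw [e1, e2] at IH
      have hcr := cross_of_condOne hpos
        (hmono s (σ ⊓ τ) τ (fun t _ => inf_le_right))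
      have e3 : Function.update τ s false = τ := by
        rw [← hs2]; exact Function.update_eq_self s τ
      have e4 : Function.update (σ ⊓ τ) s false = σ ⊓ τ := by
        have : (σ ⊓ τ) s = false := by simp [Pi.inf_apply, hs2]
        rw [← this]; exact Function.update_eq_self s (σ ⊓ τ)
      rw [e3, e4] at hcr
      rw [← hτ₁] at hcr
      nlinarith [hpos τ₁, hpos (σ ⊔ τ), hpos τ, hpos σ, hpos (σ ⊓ τ),
        hpos (Function.update (σ ⊓ τ) s true),
        mul_le_mul_of_nonneg_right IH (hpos τ).le,
        mul_le_mul_of_nonneg_right hcr (hpos (σ ⊔ τ)).le]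
  intro σ τ
  exact key _ σ τ rfl

lemma minusEps_lattice {μ : (S → Bool) → ℝ} (hpos : ∀ σ, 0 < μ σ)
    (hlat : ∀ σ τ : S → Bool, μ σ * μ τ ≤ μ (σ ⊓ τ) * μ (σ ⊔ τ))
    {ε : ℝ} (h0 : 0 ≤ ε) (h1 : ε ≤ 1) (η η' : S → Bool) :
    minusEps μ ε η * minusEps μ ε η' ≤ minusEps μ ε (η ⊓ η') * minusEps μ ε (η ⊔ η') := by
  rw [minusEps_eq, minusEps_eq, minusEps_eq, minusEps_eq]
  have hnn : ∀ (ζ : S → Bool), (0 : (S → Bool) → ℝ) ≤ fun σ => μ σ * ∏ s, Kf ε (ζ s) (σ s) :=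
    fun ζ σ => mul_nonneg (hpos σ).le (Finset.prod_nonneg fun s _ => Kf_nonneg h0 h1 _ _)
  refine four_functions_theorem_univ _ _ _ _ (hnn η) (hnn η') (hnn (η ⊓ η')) (hnn (η ⊔ η')) ?_
  intro a b
  have hprod : (∏ s, Kf ε (η s) (a s)) * ∏ s, Kf ε (η' s) (b s) ≤
      (∏ s, Kf ε ((η ⊓ η') s) ((a ⊓ b) s)) * ∏ s, Kf ε ((η ⊔ η') s) ((a ⊔ b) s) := by
    rw [← Finset.prod_mul_distrib, ← Finset.prod_mul_distrib]
    refine Finset.prod_le_prod (fun s _ => mul_nonneg (Kf_nonneg h0 h1 _ _) (Kf_nonneg h0 h1 _ _))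
      (fun s _ => ?_)
    simpa [Pi.inf_apply, Pi.sup_apply] using Kf_lattice h0 h1 (η s) (η' s) (a s) (b s)
  calc μ a * (∏ s, Kf ε (η s) (a s)) * (μ b * ∏ s, Kf ε (η' s) (b s))
      = (μ a * μ b) * ((∏ s, Kf ε (η s) (a s)) * ∏ s, Kf ε (η' s) (b s)) := by ring
    _ ≤ (μ (a ⊓ b) * μ (a ⊔ b)) *
        ((∏ s, Kf ε ((η ⊓ η') s) ((a ⊓ b) s)) * ∏ s, Kf ε ((η ⊔ η') s) ((a ⊔ b) s)) := by
        refine mul_le_mul (hlat a b) hprod ?_ ?_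
        · exact mul_nonneg (Finset.prod_nonneg fun s _ => Kf_nonneg h0 h1 _ _)
            (Finset.prod_nonneg fun s _ => Kf_nonneg h0 h1 _ _)
        · exact mul_nonneg (hpos _).le (hpos _).le
    _ = μ (a ⊓ b) * (∏ s, Kf ε ((η ⊓ η') s) ((a ⊓ b) s)) *
        (μ (a ⊔ b) * ∏ s, Kf ε ((η ⊔ η') s) ((a ⊔ b) s)) := by ring

end BromanSteifAux

theorem lemma32 (μ : (S → Bool) → ℝ) (hμ : IsProbWeight μ)
    (hmono : IsMonotoneWeight μ) (ε : ℝ) (hε : ε ∈ Set.Ioo (0 : ℝ) 1) :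
    IsProbWeight (minusEps μ ε) ∧ IsMonotoneWeight (minusEps μ ε) := by
  obtain ⟨hpos, hsum⟩ := hμ
  obtain ⟨hε0, hε1⟩ := hε
  have h0 : (0 : ℝ) ≤ ε := hε0.le
  have h1 : ε ≤ 1 := hε1.le
  have hKnn : ∀ (ζ σ : S → Bool), 0 ≤ ∏ s, Kf ε (ζ s) (σ s) :=
    fun ζ σ => Finset.prod_nonneg fun s _ => Kf_nonneg h0 h1 _ _
  have hνpos : ∀ η, 0 < minusEps μ ε η := by
    intro η
    rw [minusEps_eq]
    refine Finset.sum_pos' (fun σ _ => mul_nonneg (hpos σ).le (hKnn η σ)) ⟨η, Finset.mem_univ η, ?_⟩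
    refine mul_pos (hpos η) (Finset.prod_pos fun s _ => ?_)
    rcases hb : η s <;> simp [Kf] <;> linarith
  constructor
  · refine ⟨hνpos, ?_⟩
    have : ∀ η : S → Bool, minusEps μ ε η = ∑ σ : S → Bool, μ σ * ∏ s, Kf ε (η s) (σ s) :=
      fun η => minusEps_eq μ ε η
    rw [Finset.sum_congr rfl (fun η _ => this η), Finset.sum_comm]
    have hone : ∀ σ : S → Bool, ∑ η : S → Bool, μ σ * ∏ s, Kf ε (η s) (σ s) = μ σ := by
      intro σ
      rw [← Finset.mul_sum]
      have hswap := Finset.prod_univ_sum (fun _ : S => (Finset.univ : Finset Bool))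
        (fun s b => Kf ε b (σ s))
      simp only [Fintype.piFinset_univ] at hswap
      rw [← hswap]
      have : ∀ s : S, ∑ b : Bool, Kf ε b (σ s) = 1 := by
        intro s
        rw [Fintype.sum_bool]
        rcases hb : σ s <;> simp [Kf] <;> ring
      rw [Finset.prod_congr rfl (fun s _ => this s), Finset.prod_const_one, mul_one]
    rw [Finset.sum_congr rfl (fun σ _ => hone σ)]
    exact hsum
  · intro s ξ ξ' hle
    apply condOne_of_cross hνpos
    have key := minusEps_lattice hpos (lattice_of_monotone hpos hmono) h0 h1
      (Function.update ξ s true) (Function.update ξ' s false)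
    have e1 : Function.update ξ s true ⊓ Function.update ξ' s false
        = Function.update ξ s false := by
      funext t
      by_cases ht : t = s
      · subst ht; simp [Pi.inf_apply, Function.update_self]
      · simp only [Pi.inf_apply, Function.update_of_ne ht]
        exact inf_eq_left.2 (hle t ht)
    have e2 : Function.update ξ s true ⊔ Function.update ξ' s false
        = Function.update ξ' s true := by
      funext t
      by_cases ht : t = s
      · subst ht; simp [Pi.sup_apply, Function.update_self]
      · simp only [Pi.sup_apply, Function.update_of_ne ht]
        exact sup_eq_right.2 (hle t ht)
    rw [e1, e2] at key
    linarith [key]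
end

section
/- Let S be a finite set and let μ₁, μ₂ be probability measures on {0,1}^S assigning positive probability to every configuration, with μ₁ monotone. Set A := inf over s ∈ S and ξ ∈ {0,1}^{S∖{s}} of [μ₂(σ(s)=1 | σ ≡ ξ on S∖{s}) − μ₁(σ(s)=1 | σ ≡ ξ on S∖{s})], and assume A > 0. Then for every ε ∈ (0,1) satisfying A > 1/(1−ε) − 1, one has μ₁^{(+,ε)} ≼ μ₂. -/
/-!
Statement 0 (Lemma 3.1 of Broman–Steif): for a monotone, fully supported probability
measure `μ` on `{0,1}^S` (`S` finite) and `ε ∈ (0,1)`, the conditional probabilities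
of the downward (resp. upward) `ε`-perturbation satisfy
`μ^{(-,ε)}(1|ξ) ≥ (1-ε) μ(1|ξ)` and `μ^{(+,ε)}(0|ξ) ≥ (1-ε) μ(0|ξ)`.

Configurations on a finite set `S` are functions `S → Bool` (`true` = 1, `false` = 0),
probability measures are represented by their weight functions.
-/

open Finset

variable {S : Type*} [Fintype S] [DecidableEq S]

/-- Stochastic domination `μ ≼ ν` for weight functions on `{0,1}^S`, `S` finite:
`∑ f dμ ≤ ∑ f dν` for every nondecreasing `f` (coordinatewise order, `false < true`). -/
def Dominates (μ ν : (S → Bool) → ℝ) : Prop :=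
  ∀ f : (S → Bool) → ℝ, Monotone f →
    ∑ σ : S → Bool, μ σ * f σ ≤ ∑ σ : S → Bool, ν σ * f σ

/-!
By Holley's criterion it suffices to compare single-site conditional probabilities:
`μ₁^{(+,ε)}(1 | ξ) ≤ μ₂(1 | ξ')` whenever `ξ ≤ ξ'`. For positive weights this single-site
condition propagates, one site at a time, to the lattice condition
`ν₁ α · ν₂ β ≤ ν₁ (α ⊓ β) · ν₂ (α ⊔ β)`, to which Mathlib's `holley` applies.
Conditioned on `ξ` off `s`, `μ^{(+,ε)}` is a mixture over configurations `σ ≤ ξ` off `s`, so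
for monotone `μ` one gets `μ^{(+,ε)}(0 | ξ) ≥ (1 - ε) μ(0 | ξ)`. Hence
`μ₁^{(+,ε)}(1 | ξ) ≤ μ₁(1 | ξ) + ε ≤ μ₁(1 | ξ') + A ≤ μ₂(1 | ξ')`, since `ε ≤ ε / (1 - ε) < A`.
-/
open Function

lemma condOne_add_condZero {ι : Type*} [DecidableEq ι] {μ : (ι → Bool) → ℝ}
    (hμ : ∀ σ, 0 < μ σ) (s : ι) (ξ : ι → Bool) : condOne μ s ξ + condZero μ s ξ = 1 := by
  rw [condOne, condZero, ← add_div, div_self (add_pos (hμ _) (hμ _)).ne']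

lemma condOne_nonneg {ι : Type*} [DecidableEq ι] {μ : (ι → Bool) → ℝ} (hμ : ∀ σ, 0 < μ σ)
    (s : ι) (ξ : ι → Bool) : 0 ≤ condOne μ s ξ :=
  div_nonneg (hμ _).le (add_pos (hμ _) (hμ _)).le

lemma condOne_le_condOne_iff {ι : Type*} [DecidableEq ι] {μ ν : (ι → Bool) → ℝ}
    (hμ : ∀ σ, 0 < μ σ) (hν : ∀ σ, 0 < ν σ) (s : ι) (ξ ξ' : ι → Bool) :
    condOne μ s ξ ≤ condOne ν s ξ' ↔
      μ (update ξ s true) * ν (update ξ' s false) ≤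
        μ (update ξ s false) * ν (update ξ' s true) := by
  rw [condOne, condOne, div_le_div_iff₀ (add_pos (hμ _) (hμ _)) (add_pos (hν _) (hν _))]
  constructor <;> intro h <;> linarith

lemma sum_update_false_add_update_true {M : Type*} [AddCommMonoid M] (s : S)
    (f : (S → Bool) → M) :
    ∑ σ : S → Bool, (f (update σ s false) + f (update σ s true)) = 2 • ∑ σ : S → Bool, f σ := by
  have hflip : Involutive fun σ : S → Bool => update σ s (!σ s) := fun σ => by simp
  have hpair : ∀ σ, f (update σ s false) + f (update σ s true) = f σ + f (update σ s (!σ s)) := by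
    intro σ
    have hσ : update σ s (σ s) = σ := update_eq_self s σ
    cases h : σ s <;> simp only [h] at hσ <;> simp [hσ, add_comm]
  rw [Finset.sum_congr rfl fun σ _ => hpair σ, Finset.sum_add_distrib,
    Fintype.sum_bijective _ hflip.bijective _ f fun _ => rfl, two_nsmul]

lemma sum_le_sum_of_update_pairs (s : S) {f g : (S → Bool) → ℝ}
    (h : ∀ σ, f (update σ s false) + f (update σ s true) ≤
      g (update σ s false) + g (update σ s true)) :
    ∑ σ : S → Bool, f σ ≤ ∑ σ : S → Bool, g σ := by
  have := Finset.sum_le_sum fun σ (_ : σ ∈ Finset.univ) => h σ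
  rw [sum_update_false_add_update_true, sum_update_false_add_update_true] at this
  simpa using this

section Holley

variable {μ ν : (S → Bool) → ℝ}

lemma mul_le_inf_mul_sup_of_condOne_le (hμ : ∀ σ, 0 < μ σ) (hν : ∀ σ, 0 < ν σ)
    (h : ∀ s ξ ξ', ξ ≤ ξ' → condOne μ s ξ ≤ condOne ν s ξ') (α β : S → Bool) :
    μ α * ν β ≤ μ (α ⊓ β) * ν (α ⊔ β) := by
  induction α using WellFoundedLT.induction with
  | _ α ih =>
  by_cases hαβ : α ≤ β
  · rw [inf_eq_left.2 hαβ, sup_eq_right.2 hαβ]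
  obtain ⟨s, hs⟩ : ∃ s, ¬α s ≤ β s := by simpa [Pi.le_def] using hαβ
  obtain ⟨hαs, hβs⟩ : α s = true ∧ β s = false := by revert hs; cases α s <;> cases β s <;> decide
  set α' := update α s false
  have hα'α : α' < α := by
    refine lt_of_le_of_ne (update_le_iff.2 ⟨by simp, fun _ _ => le_rfl⟩) fun he => ?_
    simpa [α', hαs] using congrFun he s
  have hstep : μ α * ν (α' ⊔ β) ≤ μ α' * ν (α ⊔ β) := by
    have := (condOne_le_condOne_iff hμ hν s α (α ⊔ β)).1 (h s α (α ⊔ β) le_sup_left)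
    have hsup : update (α ⊔ β) s false = α' ⊔ β := by
      ext t
      by_cases ht : t = s
      · subst ht; simp [α', hβs]
      · simp [α', ht]
    have hα : update α s true = α := update_eq_self_iff.2 hαs.symm
    have hαβ : update (α ⊔ β) s true = α ⊔ β := update_eq_self_iff.2 (by simp [hαs])
    rwa [hsup, hα, hαβ] at this
  have hinf : α' ⊓ β = α ⊓ β := by
    ext t
    by_cases ht : t = s
    · subst ht; simp [α', hβs]
    · simp [α', ht]
  have hpos : 0 < μ α' * ν (α' ⊔ β) := mul_pos (hμ _) (hν _)
  have hih := ih α' hα'α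
  rw [hinf] at hih
  refine le_of_mul_le_mul_right ?_ hpos
  calc μ α * ν β * (μ α' * ν (α' ⊔ β)) = μ α * ν (α' ⊔ β) * (μ α' * ν β) := by ring
    _ ≤ μ α' * ν (α ⊔ β) * (μ (α ⊓ β) * ν (α' ⊔ β)) :=
      mul_le_mul hstep hih (mul_pos (hμ _) (hν _)).le (mul_pos (hμ _) (hν _)).le
    _ = μ (α ⊓ β) * ν (α ⊔ β) * (μ α' * ν (α' ⊔ β)) := by ring

lemma dominates_of_condOne_le (hμ : ∀ σ, 0 < μ σ) (hν : ∀ σ, 0 < ν σ)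
    (hmass : ∑ σ : S → Bool, μ σ = ∑ σ : S → Bool, ν σ)
    (h : ∀ s ξ ξ', ξ ≤ ξ' → condOne μ s ξ ≤ condOne ν s ξ') : Dominates μ ν := by
  intro f hf
  -- `holley` wants a nonnegative test function; shifting `f` by a constant costs nothing.
  have hshift := holley μ ν (fun σ => f σ - f ⊥) (fun σ => sub_nonneg.2 (hf bot_le))
    (fun σ => (hμ σ).le) (fun σ => (hν σ).le) (fun _ _ hle => sub_le_sub_right (hf hle) _) hmass
    (mul_le_inf_mul_sup_of_condOne_le hμ hν h)
  have hsplit : ∀ ρ : (S → Bool) → ℝ,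
      ∑ σ, ρ σ * f σ = ∑ σ, (f σ - f ⊥) * ρ σ + (∑ σ, ρ σ) * f ⊥ := by
    intro ρ
    rw [Finset.sum_mul, ← Finset.sum_add_distrib]
    exact Finset.sum_congr rfl fun σ _ => by ring
  rw [hsplit μ, hsplit ν, hmass]
  linarith

end Holley

section PlusEps

def plusKernel (ε : ℝ) (b c : Bool) : ℝ :=
  if c then (if b then 1 else ε) else (if b then 0 else 1 - ε)

variable {μ : (S → Bool) → ℝ} {ε : ℝ}

lemma plusEps_eq_sum_prod_plusKernel (η : S → Bool) :
    plusEps μ ε η = ∑ σ : S → Bool, μ σ * ∏ s, plusKernel ε (σ s) (η s) := rfl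

lemma plusKernel_nonneg (hε₀ : 0 ≤ ε) (hε₁ : ε ≤ 1) (b c : Bool) : 0 ≤ plusKernel ε b c := by
  unfold plusKernel; split_ifs <;> linarith

lemma plusKernel_true_add_false (b : Bool) : plusKernel ε b true + plusKernel ε b false = 1 := by
  cases b <;> simp [plusKernel]

lemma plusEps_pos (hμ : ∀ σ, 0 < μ σ) (hε₀ : 0 ≤ ε) (hε₁ : ε < 1) (η : S → Bool) :
    0 < plusEps μ ε η := by
  rw [plusEps_eq_sum_prod_plusKernel]
  refine Finset.sum_pos' (fun σ _ => mul_nonneg (hμ σ).le <| Finset.prod_nonneg fun t _ =>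
    plusKernel_nonneg hε₀ hε₁.le _ _) ⟨η, Finset.mem_univ η, ?_⟩
  refine mul_pos (hμ η) (Finset.prod_pos fun t _ => ?_)
  cases η t <;> simp [plusKernel]; linarith

lemma sum_plusEps (μ : (S → Bool) → ℝ) (ε : ℝ) :
    ∑ η : S → Bool, plusEps μ ε η = ∑ σ : S → Bool, μ σ := by
  simp_rw [plusEps_eq_sum_prod_plusKernel]
  rw [Finset.sum_comm]
  refine Finset.sum_congr rfl fun σ _ => ?_
  rw [← Finset.mul_sum, ← Fintype.prod_sum (fun s => plusKernel ε (σ s))]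
  simp [plusKernel_true_add_false]

lemma mul_condZero_le_condZero_plusEps (hμ : ∀ σ, 0 < μ σ) (hmono : IsMonotoneWeight μ)
    (hε₀ : 0 ≤ ε) (hε₁ : ε < 1) (s : S) (ξ : S → Bool) :
    (1 - ε) * condZero μ s ξ ≤ condZero (plusEps μ ε) s ξ := by
  -- `R σ` is the kernel weight off `s`; it vanishes unless `σ ≤ ξ` off `s`, which is where
  -- monotonicity of `μ` enters.
  set R : (S → Bool) → ℝ := fun σ => ∏ t ∈ Finset.univ.erase s, plusKernel ε (σ t) (ξ t)
  have hR_update : ∀ σ b, R (update σ s b) = R σ := fun σ b =>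
    Finset.prod_congr rfl fun t ht => by rw [update_of_ne (Finset.ne_of_mem_erase ht)]
  have hR_nonneg : ∀ σ, 0 ≤ R σ := fun σ =>
    Finset.prod_nonneg fun t _ => plusKernel_nonneg hε₀ hε₁.le _ _
  have hR_support : ∀ σ, R σ ≠ 0 → ∀ t, t ≠ s → σ t ≤ ξ t := by
    intro σ hσ t ht
    by_contra hlt
    refine hσ (Finset.prod_eq_zero (Finset.mem_erase.2 ⟨ht, Finset.mem_univ t⟩) ?_)
    revert hlt; cases σ t <;> cases ξ t <;> simp [plusKernel]
  have hfactor : ∀ b, plusEps μ ε (update ξ s b) = ∑ σ, μ σ * R σ * plusKernel ε (σ s) b := by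
    refine fun b => (plusEps_eq_sum_prod_plusKernel _).trans (Finset.sum_congr rfl fun σ _ => ?_)
    rw [← Finset.mul_prod_erase _ _ (Finset.mem_univ s), update_self,
      Finset.prod_congr rfl fun t ht => by rw [update_of_ne (Finset.ne_of_mem_erase ht)]]
    ring
  have htotal : plusEps μ ε (update ξ s true) + plusEps μ ε (update ξ s false)
      = ∑ σ, μ σ * R σ := by
    rw [hfactor, hfactor, ← Finset.sum_add_distrib]
    simp [← mul_add, plusKernel_true_add_false]
  have htotal_pos : 0 < ∑ σ, μ σ * R σ :=
    htotal ▸ add_pos (plusEps_pos hμ hε₀ hε₁ _) (plusEps_pos hμ hε₀ hε₁ _)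
  rw [condZero.eq_1 (plusEps μ ε), htotal, le_div_iff₀ htotal_pos, hfactor, Finset.mul_sum]
  refine sum_le_sum_of_update_pairs s fun σ => ?_
  simp only [hR_update, update_self, plusKernel, Bool.false_eq_true, if_true, if_false, mul_zero,
    add_zero]
  rcases (hR_nonneg σ).eq_or_lt with hR | hR
  · simp [← hR]
  have hcond : condZero μ s ξ ≤ condZero μ s σ := by
    have := hmono s σ ξ (hR_support σ hR.ne')
    linarith [condOne_add_condZero hμ s σ, condOne_add_condZero hμ s ξ]
  rw [condZero.eq_1 μ s σ, le_div_iff₀ (add_pos (hμ _) (hμ _))] at hcond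
  have hcoef : 0 ≤ (1 - ε) * R σ := mul_nonneg (by linarith) hR.le
  nlinarith [mul_le_mul_of_nonneg_left hcond hcoef]

end PlusEps

theorem lemma33'_general (μ₁ μ₂ : (S → Bool) → ℝ) (h₁ : IsProbWeight μ₁) (h₂ : IsProbWeight μ₂)
    (hmono : IsMonotoneWeight μ₁) (A : ℝ)
    (hA : A = sInf {x : ℝ | ∃ (s : S) (ξ : S → Bool), x = condOne μ₂ s ξ - condOne μ₁ s ξ})
    (ε : ℝ) (hε : ε ∈ Set.Ioo (0 : ℝ) 1)
    (hεA : 1 / (1 - ε) - 1 < A) :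
    Dominates (plusEps μ₁ ε) μ₂ := by
  obtain ⟨hμ₁, hsum₁⟩ := h₁
  obtain ⟨hμ₂, hsum₂⟩ := h₂
  obtain ⟨hε₀, hε₁⟩ := hε
  have hA_le : ∀ s ξ, A ≤ condOne μ₂ s ξ - condOne μ₁ s ξ := by
    have hfin : {x : ℝ | ∃ (s : S) (ξ : S → Bool), x = condOne μ₂ s ξ - condOne μ₁ s ξ}.Finite :=
      (Set.finite_range fun p : S × (S → Bool) => condOne μ₂ p.1 p.2 - condOne μ₁ p.1 p.2).subset
        (by rintro x ⟨s, ξ, rfl⟩; exact ⟨(s, ξ), rfl⟩)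
    exact fun s ξ => hA ▸ csInf_le hfin.bddBelow ⟨s, ξ, rfl⟩
  have hε_lt_A : ε < A := by
    refine lt_of_le_of_lt ?_ hεA
    rw [le_sub_iff_add_le, le_div_iff₀ (by linarith)]
    nlinarith
  have hP := plusEps_pos hμ₁ hε₀.le hε₁
  refine dominates_of_condOne_le hP hμ₂ (by rw [sum_plusEps, hsum₁, hsum₂]) fun s ξ ξ' hξ => ?_
  have hzero := mul_condZero_le_condZero_plusEps hμ₁ hmono hε₀.le hε₁ s ξ
  have hcond₁ := hmono s ξ ξ' fun t _ => hξ t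
  have hεz : ε * condZero μ₁ s ξ ≤ ε :=
    mul_le_of_le_one_right hε₀.le <| by
      linarith [condOne_nonneg hμ₁ s ξ, condOne_add_condZero hμ₁ s ξ]
  linarith [condOne_add_condZero hP s ξ, condOne_add_condZero hμ₁ s ξ, hA_le s ξ']

theorem lemma33' (μ₁ μ₂ : (S → Bool) → ℝ) (h₁ : IsProbWeight μ₁) (h₂ : IsProbWeight μ₂)
    (hmono : IsMonotoneWeight μ₁) (A : ℝ)
    (hA : A = sInf {x : ℝ | ∃ (s : S) (ξ : S → Bool), x = condOne μ₂ s ξ - condOne μ₁ s ξ})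
    (hApos : 0 < A) (ε : ℝ) (hε : ε ∈ Set.Ioo (0 : ℝ) 1)
    (hεA : 1 / (1 - ε) - 1 < A) :
    Dominates (plusEps μ₁ ε) μ₂ :=
  lemma33'_general μ₁ μ₂ h₁ h₂ hmono A hA ε hε hεA
end

section
/- Let G = (V,E) be a finite graph, p ∈ (0,1), and set β = −log(1−p)/2 (equivalently p = 1 − e^{−2β}). Let P^p be the Edwards–Sokal coupling measure on {-1,+1}^V × {0,1}^E. Then (i) the marginal of P^p on {-1,+1}^V is the Ising measure μ^{β,0}: for every σ, Σ_η P^p(σ,η) = μ^{β,0}(σ); and (ii) the marginal of P^p on {0,1}^E is the q=2 random-cluster measure ν^p: for every η, Σ_σ P^p(σ,η) = ν^p(η). -/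
/-!
The Edwards–Sokal coupling of the Ising measure (β = -log(1-p)/2, zero external field)
and the q = 2 random-cluster measure on a finite graph. Spins are `σ : V → Bool`
(`true` = `+1`, `false` = `-1`); edge configurations are `η : G.edgeSet → Bool`.
-/

open Finset

/-- The `±1` value of a spin. -/
def spin (b : Bool) : ℝ := if b then 1 else -1

/-- The interaction energy `σ(t)σ(t')` of an (unordered) edge. -/
def edgeTerm {V : Type*} (σ : V → Bool) : Sym2 V → ℝ :=
  Sym2.lift ⟨fun a b => spin (σ a) * spin (σ b), fun a b => by ring⟩

/-- The Ising weight with zero external field: `μ^{β,0}(σ) ∝ exp (β ∑_{{t,t'} ∈ E} σ(t)σ(t'))`. -/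
noncomputable def isingWeight {V : Type*} [DecidableEq V] [Fintype V] (G : SimpleGraph V)
    [DecidableRel G.Adj] (β : ℝ) (σ : V → Bool) : ℝ :=
  Real.exp (β * ∑ e ∈ G.edgeFinset, edgeTerm σ e) /
    ∑ τ : V → Bool, Real.exp (β * ∑ e ∈ G.edgeFinset, edgeTerm τ e)

/-- The spanning subgraph of `G` consisting of the `η`-open edges. -/
def openGraph {V : Type*} (G : SimpleGraph V) (η : G.edgeSet → Bool) : SimpleGraph V :=
  SimpleGraph.fromEdgeSet {f : Sym2 V | ∃ hf : f ∈ G.edgeSet, η ⟨f, hf⟩ = true}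

/-- `k(η)`: the number of connected components (isolated vertices included) of the spanning
subgraph of `η`-open edges. -/
noncomputable def numComponents {V : Type*} (G : SimpleGraph V) (η : G.edgeSet → Bool) : ℕ :=
  Nat.card (openGraph G η).ConnectedComponent

/-- The (unnormalized) q = 2 random-cluster weight `2^{k(η)} ∏_e p^{η(e)} (1-p)^{1-η(e)}`. -/
noncomputable def rcNum {V : Type*} [DecidableEq V] [Fintype V] (G : SimpleGraph V)
    [DecidableRel G.Adj] (p : ℝ) (η : G.edgeSet → Bool) : ℝ :=
  2 ^ numComponents G η * ∏ e : G.edgeSet, (if η e then p else 1 - p)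

/-- The q = 2 random-cluster measure `ν^p` on `{0,1}^E`. -/
noncomputable def rcWeight {V : Type*} [DecidableEq V] [Fintype V] (G : SimpleGraph V)
    [DecidableRel G.Adj] (p : ℝ) (η : G.edgeSet → Bool) : ℝ :=
  rcNum G p η / ∑ η' : G.edgeSet → Bool, rcNum G p η'

/-- `(σ, η)` is compatible: no open edge joins two sites with different spins. -/
def Compatible {V : Type*} (G : SimpleGraph V) (σ : V → Bool) (η : G.edgeSet → Bool) : Prop :=
  ∀ e : G.edgeSet, η e = true → ∀ x ∈ (e : Sym2 V), ∀ y ∈ (e : Sym2 V), σ x = σ y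

open scoped Classical in
/-- The (unnormalized) Edwards–Sokal weight of `(σ, η)`. -/
noncomputable def esNum {V : Type*} [DecidableEq V] [Fintype V] (G : SimpleGraph V)
    [DecidableRel G.Adj] (p : ℝ) (σ : V → Bool) (η : G.edgeSet → Bool) : ℝ :=
  (∏ e : G.edgeSet, (if η e then p else 1 - p)) * (if Compatible G σ η then 1 else 0)

/-- The Edwards–Sokal coupling measure `P^p` on `{-1,+1}^V × {0,1}^E`. -/
noncomputable def esWeight {V : Type*} [DecidableEq V] [Fintype V] (G : SimpleGraph V)
    [DecidableRel G.Adj] (p : ℝ) (σ : V → Bool) (η : G.edgeSet → Bool) : ℝ :=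
  esNum G p σ η /
    ∑ σ' : V → Bool, ∑ η' : G.edgeSet → Bool, esNum G p σ' η'

/-!
Summing the coupling over bonds factorizes over edges: an edge whose endpoints agree contributes
`p + (1 - p) = 1`, one whose endpoints disagree only `1 - p = e^{-2β}`, so the edge factor is
`e^{-β} e^{β σ(x)σ(y)}` and the constant `e^{-β |E|}` cancels on normalizing. Summing over spins
instead, the spin configurations compatible with `η` are exactly the functions constant on the
open clusters, of which there are `2^{k(η)}`.
-/

lemma SimpleGraph.Reachable.eq_of_forall_adj_eq {V β : Type*} {H : SimpleGraph V} {f : V → β}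
    (hf : ∀ a b, H.Adj a b → f a = f b) {u v : V} (huv : H.Reachable u v) : f u = f v := by
  obtain ⟨w⟩ := huv
  induction w with
  | nil => rfl
  | cons h _ ih => exact (hf _ _ h).trans ih

def SimpleGraph.liftAdjEquiv {V : Type*} (H : SimpleGraph V) (β : Type*) :
    {f : V → β // ∀ a b, H.Adj a b → f a = f b} ≃ (H.ConnectedComponent → β) where
  toFun f := SimpleGraph.ConnectedComponent.lift f.1 fun _ _ w _ =>
    w.reachable.eq_of_forall_adj_eq f.2
  invFun g := ⟨fun v => g (H.connectedComponentMk v), fun _ _ h =>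
    congrArg g (SimpleGraph.ConnectedComponent.sound h.reachable)⟩
  left_inv _ := rfl
  right_inv _ := funext fun c => c.ind fun _ => rfl

lemma forall_mem_sym2_eq_iff {α β : Type*} (f : α → β) (a b : α) :
    (∀ x ∈ s(a, b), ∀ y ∈ s(a, b), f x = f y) ↔ f a = f b := by
  simp only [Sym2.mem_iff, forall_eq_or_imp, forall_eq, true_and, and_true]
  exact ⟨fun h => h.1, fun h => ⟨h, h.symm⟩⟩

section EdwardsSokal

variable {V : Type*} (G : SimpleGraph V)

open scoped Classical in
lemma edgeTerm_eq_ite (σ : V → Bool) (e : Sym2 V) :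
    edgeTerm σ e = if ∀ x ∈ e, ∀ y ∈ e, σ x = σ y then 1 else -1 := by
  induction e using Sym2.ind with
  | _ a b =>
    rw [forall_mem_sym2_eq_iff]
    cases ha : σ a <;> cases hb : σ b <;> norm_num [edgeTerm, spin, ha, hb]

lemma compatible_iff_forall_adj_eq (σ : V → Bool) (η : G.edgeSet → Bool) :
    Compatible G σ η ↔ ∀ a b, (openGraph G η).Adj a b → σ a = σ b := by
  simp only [openGraph, SimpleGraph.fromEdgeSet_adj, Set.mem_ofPred_eq]
  constructor
  · rintro hσ a b ⟨⟨he, hη⟩, -⟩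
    exact hσ ⟨_, he⟩ hη a (Sym2.mem_mk_left a b) b (Sym2.mem_mk_right a b)
  · rintro h ⟨e, he⟩ hη
    induction e using Sym2.ind with
    | _ a b =>
      rw [forall_mem_sym2_eq_iff]
      by_cases hab : a = b
      · rw [hab]
      · exact h a b ⟨⟨he, hη⟩, hab⟩

lemma card_compatible_eq_two_pow [Finite V] (η : G.edgeSet → Bool) :
    Nat.card {σ : V → Bool // Compatible G σ η} = 2 ^ numComponents G η := by
  simp only [compatible_iff_forall_adj_eq]
  rw [Nat.card_congr ((openGraph G η).liftAdjEquiv Bool), Nat.card_fun, Nat.card_eq_fintype_card,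
    Fintype.card_bool, numComponents]

open scoped Classical in
noncomputable def esEdgeWeight (p : ℝ) (σ : V → Bool) (e : Sym2 V) (b : Bool) : ℝ :=
  (if b then p else 1 - p) * if b = true → ∀ x ∈ e, ∀ y ∈ e, σ x = σ y then 1 else 0

lemma sum_esEdgeWeight_eq_exp {p β : ℝ} (hβ : Real.exp (-2 * β) = 1 - p) (σ : V → Bool)
    (e : Sym2 V) :
    ∑ b : Bool, esEdgeWeight p σ e b = Real.exp (-β) * Real.exp (β * edgeTerm σ e) := by
  classical
  simp only [Fintype.sum_bool, esEdgeWeight, edgeTerm_eq_ite, if_true, Bool.false_eq_true,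
    if_false, true_implies, false_implies, mul_one]
  by_cases h : ∀ x ∈ e, ∀ y ∈ e, σ x = σ y
  · rw [if_pos h, if_pos h, ← Real.exp_add]
    simp
  · rw [if_neg h, if_neg h, ← Real.exp_add, ← hβ]
    ring_nf

variable [DecidableEq V] [Fintype V] [DecidableRel G.Adj]

lemma esNum_eq_prod (p : ℝ) (σ : V → Bool) (η : G.edgeSet → Bool) :
    esNum G p σ η = ∏ e : G.edgeSet, esEdgeWeight p σ e (η e) := by
  simp only [esNum, esEdgeWeight, Finset.prod_mul_distrib]
  congr 1
  by_cases h : Compatible G σ η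
  · exact (if_pos h).trans (Finset.prod_eq_one fun e _ => if_pos (h e)).symm
  · obtain ⟨e, he⟩ := not_forall.1 h
    exact (if_neg h).trans (Finset.prod_eq_zero (Finset.mem_univ e) (if_neg he)).symm

lemma sum_esNum_eq_exp {p β : ℝ} (hβ : Real.exp (-2 * β) = 1 - p) (σ : V → Bool) :
    ∑ η : G.edgeSet → Bool, esNum G p σ η =
      Real.exp (-β) ^ Fintype.card G.edgeSet *
        Real.exp (β * ∑ e ∈ G.edgeFinset, edgeTerm σ e) := by
  simp only [esNum_eq_prod]
  rw [← Fintype.prod_sum]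
  simp only [sum_esEdgeWeight_eq_exp hβ]
  rw [Finset.prod_mul_distrib, Finset.prod_const, Finset.card_univ, ← Real.exp_sum, Finset.mul_sum,
    Finset.sum_subtype G.edgeFinset fun _ => SimpleGraph.mem_edgeFinset]

lemma sum_esNum_eq_rcNum (p : ℝ) (η : G.edgeSet → Bool) :
    ∑ σ : V → Bool, esNum G p σ η = rcNum G p η := by
  classical
  simp only [esNum, ← Finset.mul_sum, Finset.sum_boole]
  rw [← Fintype.card_subtype, Fintype.card_eq_nat_card, card_compatible_eq_two_pow, rcNum]
  push_cast
  ring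

end EdwardsSokal

theorem edwards_sokal_marginals {V : Type*} [DecidableEq V] [Fintype V] (G : SimpleGraph V)
    [DecidableRel G.Adj] (p : ℝ) (hp : p ∈ Set.Ioo (0 : ℝ) 1) (β : ℝ)
    (hβ : β = -Real.log (1 - p) / 2) :
    (∀ σ : V → Bool, ∑ η : G.edgeSet → Bool, esWeight G p σ η = isingWeight G β σ) ∧
    (∀ η : G.edgeSet → Bool, ∑ σ : V → Bool, esWeight G p σ η = rcWeight G p η) := by
  have hexp : Real.exp (-2 * β) = 1 - p := by
    rw [hβ, show -2 * (-Real.log (1 - p) / 2) = Real.log (1 - p) by ring,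
      Real.exp_log (sub_pos.2 hp.2)]
  refine ⟨fun σ => ?_, fun η => ?_⟩
  · simp only [esWeight, ← Finset.sum_div, sum_esNum_eq_exp G hexp, ← Finset.mul_sum]
    exact mul_div_mul_left _ _ (pow_ne_zero _ (Real.exp_pos _).ne')
  · simp only [esWeight, ← Finset.sum_div, rcWeight]
    rw [Finset.sum_comm]
    simp only [sum_esNum_eq_rcNum]
end

section
/- Let S be a countable set, let μ be a Borel probability measure on {0,1}^S having positive correlations, and let ε ∈ [0,1]. Then μ^{(-,ε)} has positive correlations. -/
/-!
Configurations on a countable set `S` are `η : S → Bool` (`true` = 1, `false` = 0), with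
the product topology and product σ-algebra. The measures `μ^{(-,ε)}` and `μ^{(+,ε)}` are
characterized by their values on the generating π-systems of cylinder events
`{η ≡ 1 on F}` (resp. `{η ≡ 0 on F}`), `F` finite: if `X ∼ μ` and, independently,
`Z = (Z s)` is i.i.d. with `P(Z s = 1) = 1 - ε`, then the law `ν` of `s ↦ min (X s) (Z s)`
satisfies `ν{η ≡ 1 on F} = (1-ε)^{|F|} μ{η ≡ 1 on F}`, and this determines `ν` uniquely
among Borel probability measures; dually for `max` with `P(Z s = 1) = ε`.
-/

open MeasureTheory Filter Topology

variable {S : Type*} [Countable S]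

/-- Stochastic domination `μ ≼ ν`: `∫ f dμ ≤ ∫ f dν` for every bounded continuous `f`
that is nondecreasing with respect to the coordinatewise partial order. -/
def StochDom (μ ν : Measure (S → Bool)) : Prop :=
  ∀ f : (S → Bool) → ℝ, Continuous f → (∃ C, ∀ x, |f x| ≤ C) → Monotone f →
    ∫ x, f x ∂μ ≤ ∫ x, f x ∂ν

/-- Weak convergence `μₙ → μ`: convergence of the integrals of all bounded continuous
functions. -/
def WeakConv (μn : ℕ → Measure (S → Bool)) (μ : Measure (S → Bool)) : Prop :=
  ∀ f : (S → Bool) → ℝ, Continuous f → (∃ C, ∀ x, |f x| ≤ C) →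
    Tendsto (fun n => ∫ x, f x ∂(μn n)) atTop (𝓝 (∫ x, f x ∂μ))

/-- `ν = μ^{(-,ε)}`: `ν` is the law of `s ↦ min (X s) (Z s)`, `X ∼ μ`, `Z` an independent
i.i.d. field with `P(Z s = 1) = 1 - ε`, characterized on the cylinders `{η ≡ 1 on F}`. -/
def IsMinusEps (μ ν : Measure (S → Bool)) (ε : ℝ) : Prop :=
  ∀ F : Finset S,
    ν {η | ∀ s ∈ F, η s = true} =
      ENNReal.ofReal ((1 - ε) ^ F.card) * μ {η | ∀ s ∈ F, η s = true}

/-- `ν = μ^{(+,ε)}`: `ν` is the law of `s ↦ max (X s) (Z s)`, `X ∼ μ`, `Z` an independent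
i.i.d. field with `P(Z s = 1) = ε`, characterized on the cylinders `{η ≡ 0 on F}`. -/
def IsPlusEps (μ ν : Measure (S → Bool)) (ε : ℝ) : Prop :=
  ∀ F : Finset S,
    ν {η | ∀ s ∈ F, η s = false} =
      ENNReal.ofReal ((1 - ε) ^ F.card) * μ {η | ∀ s ∈ F, η s = false}

/-- `μ` has positive correlations: `∫ fg dμ ≥ ∫ f dμ ∫ g dμ` for all bounded measurable
functions that are nondecreasing with respect to the coordinatewise partial order. -/
def PositiveCorrelations (μ : Measure (S → Bool)) : Prop :=
  ∀ f g : (S → Bool) → ℝ, Measurable f → Measurable g →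
    (∃ C, ∀ x, |f x| ≤ C) → (∃ C, ∀ x, |g x| ≤ C) → Monotone f → Monotone g →
    (∫ x, f x ∂μ) * (∫ x, g x ∂μ) ≤ ∫ x, f x * g x ∂μ

/-!
Let `π` be the product of Bernoulli(1 - ε) measures on `S → Bool`. Then `μ^{(-,ε)}` is the image
of `μ ⊗ π` under the coordinatewise minimum, which is monotone, so it suffices that `μ ⊗ π` has
positive correlations. Conditioning on the first factor reduces this to positive correlations of
`μ` and of `π`. The latter is Harris' inequality: for functions of finitely many coordinates it
follows by induction on their number from the two-point case; a general bounded monotone `f` is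
the a.e. limit of the martingale `𝔼[f | coordinates in J]`, `J` finite increasing, and each term,
obtained by integrating out the coordinates outside `J`, is again monotone.
-/

open ProbabilityTheory Function MeasureTheory.Measure MeasureTheory.Filtration MeasurableSpace

namespace MeasureTheory

/-- `PositiveCorrelations` on an arbitrary measurable preorder. -/
def Measure.HasPositiveCorrelations {α : Type*} [MeasurableSpace α] [Preorder α]
    (μ : Measure α) : Prop :=
  ∀ f g : α → ℝ, Measurable f → Measurable g →
    (∃ C, ∀ x, |f x| ≤ C) → (∃ C, ∀ x, |g x| ≤ C) → Monotone f → Monotone g →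
    (∫ x, f x ∂μ) * (∫ x, g x ∂μ) ≤ ∫ x, f x * g x ∂μ

variable {α β : Type*} [MeasurableSpace α] [MeasurableSpace β] {μ : Measure α} {ν : Measure β}

lemma integrable_of_abs_le [IsFiniteMeasure μ] {f : α → ℝ} (hf : Measurable f) {C : ℝ}
    (hfC : ∀ x, |f x| ≤ C) : Integrable f μ :=
  .of_bound hf.aestronglyMeasurable C (ae_of_all _ fun x => (Real.norm_eq_abs _).trans_le (hfC x))

lemma abs_integral_le_of_abs_le [IsProbabilityMeasure μ] {f : α → ℝ} {C : ℝ}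
    (hfC : ∀ x, |f x| ≤ C) : |∫ x, f x ∂μ| ≤ C := by
  simpa using norm_integral_le_of_norm_le_const (μ := μ)
    (ae_of_all _ fun x => (Real.norm_eq_abs _).trans_le (hfC x))

omit [MeasurableSpace α] in
lemma abs_mul_le_of_abs_le {f g : α → ℝ} {C D : ℝ} (hfC : ∀ x, |f x| ≤ C)
    (hgD : ∀ x, |g x| ≤ D) (x : α) : |f x * g x| ≤ C * D := by
  rw [abs_mul]
  exact mul_le_mul (hfC x) (hgD x) (abs_nonneg _) ((abs_nonneg _).trans (hfC x))

lemma monotone_integral_prod_right [Preorder α] [IsFiniteMeasure ν] {f : α × β → ℝ}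
    (hf : Measurable f) {C : ℝ} (hfC : ∀ z, |f z| ≤ C) (hfm : ∀ y, Monotone fun x => f (x, y)) :
    Monotone fun x => ∫ y, f (x, y) ∂ν := fun _ _ hx =>
  integral_mono (integrable_of_abs_le (hf.comp measurable_prodMk_left) fun _ => hfC _)
    (integrable_of_abs_le (hf.comp measurable_prodMk_left) fun _ => hfC _) fun y => hfm y hx

namespace Measure.HasPositiveCorrelations

variable [Preorder α] [Preorder β]

lemma map (hμ : μ.HasPositiveCorrelations) {φ : α → β} (hφ : Measurable φ) (hφm : Monotone φ) :
    (μ.map φ).HasPositiveCorrelations := by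
  rintro f g hf hg ⟨C, hfC⟩ ⟨D, hgD⟩ hfm hgm
  rw [integral_map hφ.aemeasurable hf.aestronglyMeasurable,
    integral_map hφ.aemeasurable hg.aestronglyMeasurable,
    integral_map (f := fun x => f x * g x) hφ.aemeasurable (hf.mul hg).aestronglyMeasurable]
  exact hμ _ _ (hf.comp hφ) (hg.comp hφ) ⟨C, fun _ => hfC _⟩ ⟨D, fun _ => hgD _⟩
    (hfm.comp hφm) (hgm.comp hφm)

omit [Preorder β] in
lemma integral_mul_integral_le_prod [IsProbabilityMeasure μ] [IsProbabilityMeasure ν]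
    (hμ : μ.HasPositiveCorrelations) {f g : α × β → ℝ} (hf : Measurable f) (hg : Measurable g)
    {C D : ℝ} (hfC : ∀ z, |f z| ≤ C) (hgD : ∀ z, |g z| ≤ D)
    (hfm : ∀ y, Monotone fun x => f (x, y)) (hgm : ∀ y, Monotone fun x => g (x, y))
    (hfiber : ∀ x, (∫ y, f (x, y) ∂ν) * (∫ y, g (x, y) ∂ν) ≤ ∫ y, f (x, y) * g (x, y) ∂ν) :
    (∫ z, f z ∂μ.prod ν) * (∫ z, g z ∂μ.prod ν) ≤ ∫ z, f z * g z ∂μ.prod ν := by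
  have hF : Measurable fun x => ∫ y, f (x, y) ∂ν :=
    hf.stronglyMeasurable.integral_prod_right'.measurable
  have hG : Measurable fun x => ∫ y, g (x, y) ∂ν :=
    hg.stronglyMeasurable.integral_prod_right'.measurable
  have hFC (x : α) : |∫ y, f (x, y) ∂ν| ≤ C := abs_integral_le_of_abs_le fun _ => hfC _
  have hGD (x : α) : |∫ y, g (x, y) ∂ν| ≤ D := abs_integral_le_of_abs_le fun _ => hgD _
  have hfgCD := abs_mul_le_of_abs_le hfC hgD
  rw [integral_prod _ (integrable_of_abs_le hf hfC), integral_prod _ (integrable_of_abs_le hg hgD),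
    integral_prod (fun z => f z * g z) (integrable_of_abs_le (hf.mul hg) hfgCD)]
  calc (∫ x, ∫ y, f (x, y) ∂ν ∂μ) * (∫ x, ∫ y, g (x, y) ∂ν ∂μ)
      ≤ ∫ x, (∫ y, f (x, y) ∂ν) * (∫ y, g (x, y) ∂ν) ∂μ :=
        hμ _ _ hF hG ⟨C, hFC⟩ ⟨D, hGD⟩ (monotone_integral_prod_right hf hfC hfm)
          (monotone_integral_prod_right hg hgD hgm)
    _ ≤ ∫ x, ∫ y, f (x, y) * g (x, y) ∂ν ∂μ :=
        integral_mono (integrable_of_abs_le (hF.mul hG) (abs_mul_le_of_abs_le hFC hGD))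
          (integrable_of_abs_le ((hf.mul hg).stronglyMeasurable.integral_prod_right'.measurable)
            fun _ => abs_integral_le_of_abs_le fun _ => hfgCD _) hfiber

lemma prod [IsProbabilityMeasure μ] [IsProbabilityMeasure ν] (hμ : μ.HasPositiveCorrelations)
    (hν : ν.HasPositiveCorrelations) : (μ.prod ν).HasPositiveCorrelations := by
  rintro f g hf hg ⟨C, hfC⟩ ⟨D, hgD⟩ hfm hgm
  refine hμ.integral_mul_integral_le_prod hf hg hfC hgD (fun _ _ _ hx => hfm ⟨hx, le_rfl⟩)
    (fun _ _ _ hx => hgm ⟨hx, le_rfl⟩) fun x => ?_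
  exact hν _ _ (hf.comp measurable_prodMk_left) (hg.comp measurable_prodMk_left)
    ⟨C, fun _ => hfC _⟩ ⟨D, fun _ => hgD _⟩ (fun _ _ hy => hfm ⟨le_rfl, hy⟩)
    (fun _ _ hy => hgm ⟨le_rfl, hy⟩)

end Measure.HasPositiveCorrelations

lemma hasPositiveCorrelations_bool (β : Measure Bool) [IsProbabilityMeasure β] :
    β.HasPositiveCorrelations := by
  rintro f g - - - - hfm hgm
  simp only [integral_fintype Integrable.of_finite, Fintype.sum_bool, smul_eq_mul]
  have hf : f false ≤ f true := hfm (Bool.false_le _)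
  have hg : g false ≤ g true := hgm (Bool.false_le _)
  have hfalse : 0 ≤ β.real {false} := measureReal_nonneg
  have htrue : 0 ≤ β.real {true} := measureReal_nonneg
  rw [show β.real {false} = 1 - β.real {true} by
    simpa using probReal_compl_eq_one_sub (μ := β) (measurableSet_singleton true)] at hfalse ⊢
  -- the difference of the two sides is `β{false} β{true} (f true - f false) (g true - g false)`
  nlinarith [mul_nonneg (mul_nonneg hfalse htrue) (mul_nonneg (sub_nonneg.2 hf) (sub_nonneg.2 hg))]

variable {ι : Type*} {X : ι → Type*} [∀ i, MeasurableSpace (X i)] {P : ∀ i, Measure (X i)}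
  [∀ i, IsProbabilityMeasure (P i)] [DecidableEq ι]

lemma measurable_updateFinset_restrict (J : Finset ι) :
    Measurable fun q : (Π i, X i) × (Π i, X i) => updateFinset q.2 J (J.restrict q.1) :=
  measurable_updateFinset'.comp (measurable_snd.prodMk (J.measurable_restrict.comp measurable_fst))

lemma map_updateFinset_restrict_infinitePi (J : Finset ι) :
    ((infinitePi P).prod (infinitePi P)).map (fun q => updateFinset q.2 J (J.restrict q.1)) =
      infinitePi P := by
  refine eq_infinitePi P fun s t ht => ?_
  have hpre : (fun q : (Π i, X i) × (Π i, X i) => updateFinset q.2 J (J.restrict q.1)) ⁻¹'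
      Set.pi s t = Set.pi ↑(s.filter (· ∈ J)) t ×ˢ Set.pi ↑(s.filter (· ∉ J)) t := by
    ext q
    simp only [Set.mem_preimage, Set.mem_pi, Set.mem_prod, Finset.coe_filter, updateFinset,
      Finset.restrict]
    constructor
    · intro h
      exact ⟨fun i ⟨hs, hJ⟩ => by simpa [hJ] using h i hs,
        fun i ⟨hs, hJ⟩ => by simpa [hJ] using h i hs⟩
    · rintro ⟨h₁, h₂⟩ i hs
      by_cases hJ : i ∈ J
      · simpa [hJ] using h₁ i ⟨hs, hJ⟩
      · simpa [hJ] using h₂ i ⟨hs, hJ⟩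
  rw [map_apply (measurable_updateFinset_restrict J) (.pi s.countable_toSet fun i _ => ht i), hpre,
    prod_prod, infinitePi_pi _ fun i _ => ht i, infinitePi_pi _ fun i _ => ht i,
    Finset.prod_filter_mul_prod_filter_not]

lemma measurable_update_swap (i : ι) :
    Measurable fun q : X i × (Π i, X i) => update q.2 i q.1 :=
  measurable_update'.comp measurable_swap

lemma map_update_infinitePi (i : ι) :
    ((P i).prod (infinitePi P)).map (fun q => update q.2 i q.1) = infinitePi P := by
  have hprod : (P i).prod (infinitePi P) =
      ((infinitePi P).prod (infinitePi P)).map (Prod.map (eval i) id) := by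
    rw [← map_prod_map _ _ (measurable_pi_apply i) measurable_id, infinitePi_map_eval,
      Measure.map_id]
  rw [hprod, map_map (measurable_update_swap i) (by fun_prop)]
  convert map_updateFinset_restrict_infinitePi (P := P) {i} using 2
  ext q j
  by_cases hj : j = i
  · subst hj
    simp [updateFinset]
  · simp [updateFinset, hj]

variable (P) in
/-- A version of `𝔼[f | piFinset J]` under `infinitePi P`. -/
noncomputable def averageOutside (J : Finset ι) (f : (Π i, X i) → ℝ) (η : Π i, X i) : ℝ :=
  ∫ ζ, f (updateFinset ζ J (J.restrict η)) ∂infinitePi P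

section averageOutside

variable {J : Finset ι} {f : (Π i, X i) → ℝ} {C : ℝ}

lemma stronglyMeasurable_averageOutside (hf : Measurable f) :
    StronglyMeasurable[piFinset J] (averageOutside P J f) :=
  ((hf.comp measurable_updateFinset').stronglyMeasurable.integral_prod_left').comp_measurable
    (Measurable.of_comap_le le_rfl)

lemma measurable_averageOutside (hf : Measurable f) : Measurable (averageOutside P J f) :=
  (stronglyMeasurable_averageOutside hf).measurable.mono (piFinset.le J) le_rfl

lemma abs_averageOutside_le (hfC : ∀ x, |f x| ≤ C) (η : Π i, X i) :
    |averageOutside P J f η| ≤ C :=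
  abs_integral_le_of_abs_le fun _ => hfC _

lemma monotone_averageOutside [∀ i, Preorder (X i)] (hf : Measurable f) (hfC : ∀ x, |f x| ≤ C)
    (hfm : Monotone f) : Monotone (averageOutside P J f) :=
  monotone_integral_prod_right (hf.comp (measurable_updateFinset_restrict J)) (fun _ => hfC _)
    fun _ _ _ h => hfm fun i => by
      simp only [updateFinset, Finset.restrict]
      split_ifs
      exacts [h i, le_rfl]

lemma setIntegral_averageOutside (hf : Measurable f) (hfC : ∀ x, |f x| ≤ C)
    {A : Set (Π i, X i)} (hA : MeasurableSet[piFinset J] A) :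
    ∫ η in A, averageOutside P J f η ∂infinitePi P = ∫ η in A, f η ∂infinitePi P := by
  have hAm : MeasurableSet A := piFinset.le J _ hA
  have hfA : Integrable (fun q : (Π i, X i) × (Π i, X i) =>
      A.indicator f (updateFinset q.2 J (J.restrict q.1))) ((infinitePi P).prod (infinitePi P)) :=
    integrable_of_abs_le ((hf.indicator hAm).comp (measurable_updateFinset_restrict J))
      fun _ => (norm_indicator_le_norm_self (s := A) f _).trans (hfC _)
  rw [← integral_indicator hAm, ← integral_indicator hAm]
  conv_rhs => rw [← map_updateFinset_restrict_infinitePi (P := P) J]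
  rw [integral_map (measurable_updateFinset_restrict J).aemeasurable
    (hf.indicator hAm).aestronglyMeasurable, integral_prod _ hfA]
  obtain ⟨B, -, rfl⟩ := hA
  refine integral_congr_ae (ae_of_all _ fun η => ?_)
  -- membership in `A` only sees the coordinates in `J`, which the resampling keeps
  by_cases hη : η ∈ J.restrict ⁻¹' B
  · simp_all [averageOutside, restrict_updateFinset]
  · simp_all [restrict_updateFinset]

lemma integral_averageOutside (hf : Measurable f) (hfC : ∀ x, |f x| ≤ C) :
    ∫ η, averageOutside P J f η ∂infinitePi P = ∫ η, f η ∂infinitePi P := by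
  simpa using setIntegral_averageOutside (J := J) hf hfC MeasurableSet.univ

lemma averageOutside_ae_eq_condExp (hf : Measurable f) (hfC : ∀ x, |f x| ≤ C) :
    averageOutside P J f =ᵐ[infinitePi P] (infinitePi P)[f | piFinset J] :=
  ae_eq_condExp_of_forall_setIntegral_eq (piFinset.le J) (integrable_of_abs_le hf hfC)
    (fun _ _ _ => (integrable_of_abs_le (measurable_averageOutside hf)
      (abs_averageOutside_le hfC)).integrableOn)
    (fun _ hA _ => setIntegral_averageOutside hf hfC hA)
    (stronglyMeasurable_averageOutside hf).aestronglyMeasurable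

lemma ae_tendsto_averageOutside {J : ℕ → Finset ι} (hJ : Monotone J)
    (hcover : ∀ i, ∃ n, i ∈ J n) (hf : Measurable f) (hfC : ∀ x, |f x| ≤ C) :
    ∀ᵐ η ∂infinitePi P, Tendsto (fun n => averageOutside P (J n) f η) atTop (𝓝 (f η)) := by
  let ℱ : Filtration ℕ (MeasurableSpace.pi : MeasurableSpace (Π i, X i)) :=
    ⟨fun n => piFinset (J n), fun _ _ h => piFinset.mono (hJ h), fun _ => piFinset.le _⟩
  have hsup : (MeasurableSpace.pi : MeasurableSpace (Π i, X i)) ≤ ⨆ n, ℱ n := by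
    refine iSup_le fun i => ?_
    obtain ⟨n, hn⟩ := hcover i
    have hi : Measurable[piFinset (J n)] fun η : Π i, X i => η i :=
      (measurable_pi_apply (X := fun j : J n => X j) ⟨i, hn⟩).comp
        (Measurable.of_comap_le (f := (J n).restrict) le_rfl)
    exact hi.comap_le.trans (le_iSup (fun n => ℱ n) n)
  have hconv := (integrable_of_abs_le (μ := infinitePi P) hf hfC).tendsto_ae_condExp
    (ℱ := ℱ) (hf.stronglyMeasurable.mono hsup)
  have heq : ∀ᵐ η ∂infinitePi P, ∀ n, averageOutside P (J n) f η = (infinitePi P)[f | ℱ n] η :=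
    ae_all_iff.2 fun _ => averageOutside_ae_eq_condExp hf hfC
  filter_upwards [hconv, heq] with η hη hη'
  simpa only [hη'] using hη

end averageOutside

variable [∀ i, Preorder (X i)]

theorem integral_mul_integral_le_of_dependsOn (hP : ∀ i, (P i).HasPositiveCorrelations)
    (J : Finset ι) {f g : (Π i, X i) → ℝ} (hfJ : DependsOn f J) (hgJ : DependsOn g J)
    (hf : Measurable f) (hg : Measurable g) {C D : ℝ} (hfC : ∀ x, |f x| ≤ C)
    (hgD : ∀ x, |g x| ≤ D) (hfm : Monotone f) (hgm : Monotone g) :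
    (∫ x, f x ∂infinitePi P) * (∫ x, g x ∂infinitePi P) ≤ ∫ x, f x * g x ∂infinitePi P := by
  induction J using Finset.induction_on generalizing f g with
  | empty =>
    obtain ⟨x₀⟩ := nonempty_of_isProbabilityMeasure (infinitePi P)
    rw [Finset.coe_empty] at hfJ hgJ
    rw [funext fun x => hfJ.empty x x₀, funext fun x => hgJ.empty x x₀]
    simp
  | insert i J hi ih =>
    have hupd := measurable_update_swap (X := X) i
    rw [← map_update_infinitePi (P := P) i, integral_map hupd.aemeasurable hf.aestronglyMeasurable,
      integral_map hupd.aemeasurable hg.aestronglyMeasurable,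
      integral_map (f := fun x => f x * g x) hupd.aemeasurable (hf.mul hg).aestronglyMeasurable]
    refine (hP i).integral_mul_integral_le_prod (hf.comp hupd) (hg.comp hupd) (fun _ => hfC _)
      (fun _ => hgD _) (fun _ => hfm.comp update_mono) (fun _ => hgm.comp update_mono)
      fun x => ?_
    have hmono : Monotone fun ζ : Π i, X i => update ζ i x := fun _ _ h =>
      update_le_update_iff.2 ⟨le_rfl, fun j _ => h j⟩
    have hJ : (insert i J).erase i = J := Finset.erase_insert hi
    exact ih (hJ ▸ hfJ.update i x) (hJ ▸ hgJ.update i x) (hf.comp measurable_update_left)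
      (hg.comp measurable_update_left) (fun _ => hfC _) (fun _ => hgD _) (hfm.comp hmono)
      (hgm.comp hmono)

theorem hasPositiveCorrelations_infinitePi [Countable ι]
    (hP : ∀ i, (P i).HasPositiveCorrelations) : (infinitePi P).HasPositiveCorrelations := by
  rintro f g hf hg ⟨C, hfC⟩ ⟨D, hgD⟩ hfm hgm
  obtain ⟨e, he⟩ := Countable.exists_injective_nat ι
  let J : ℕ → Finset ι := fun n => (Finset.range n).preimage e he.injOn
  have hJ : Monotone J := fun m n h i => by simpa [J] using fun hi : e i < m => hi.trans_le h
  have hcover (i : ι) : ∃ n, i ∈ J n := ⟨e i + 1, by simp [J]⟩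
  have hlim : Tendsto (fun n => ∫ η, averageOutside P (J n) f η * averageOutside P (J n) g η
      ∂infinitePi P) atTop (𝓝 (∫ η, f η * g η ∂infinitePi P)) := by
    refine tendsto_integral_of_dominated_convergence (fun _ => C * D)
      (fun _ => ((measurable_averageOutside hf).mul
        (measurable_averageOutside hg)).aestronglyMeasurable)
      (integrable_const _) (fun _ => ae_of_all _
        (abs_mul_le_of_abs_le (abs_averageOutside_le hfC) (abs_averageOutside_le hgD))) ?_
    filter_upwards [ae_tendsto_averageOutside hJ hcover hf hfC,
      ae_tendsto_averageOutside hJ hcover hg hgD] with η h₁ h₂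
    exact h₁.mul h₂
  refine ge_of_tendsto' hlim fun n => ?_
  rw [← integral_averageOutside (J := J n) hf hfC, ← integral_averageOutside (J := J n) hg hgD]
  exact integral_mul_integral_le_of_dependsOn hP (J n)
    (stronglyMeasurable_averageOutside hf).dependsOn_of_piFinset
    (stronglyMeasurable_averageOutside hg).dependsOn_of_piFinset (measurable_averageOutside hf)
    (measurable_averageOutside hg) (abs_averageOutside_le hfC) (abs_averageOutside_le hgD)
    (monotone_averageOutside hf hfC hfm) (monotone_averageOutside hg hgD hgm)

end MeasureTheory

section BoolConfigurations

variable {ι : Type*}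

lemma measurableSet_allTrue (F : Finset ι) :
    MeasurableSet {η : ι → Bool | ∀ i ∈ F, η i = true} := by
  simp only [Set.ofPred_forall]
  exact F.measurableSet_biInter fun i _ =>
    measurableSet_eq_fun (measurable_pi_apply i) measurable_const

lemma isPiSystem_allTrue :
    IsPiSystem (Set.range fun F : Finset ι => {η : ι → Bool | ∀ i ∈ F, η i = true}) := by
  classical
  rintro _ ⟨F, rfl⟩ _ ⟨G, rfl⟩ -
  exact ⟨F ∪ G, by ext; simp [or_imp, forall_and]⟩

lemma pi_eq_generateFrom_allTrue : (MeasurableSpace.pi : MeasurableSpace (ι → Bool)) =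
    generateFrom (Set.range fun F : Finset ι => {η : ι → Bool | ∀ i ∈ F, η i = true}) := by
  refine le_antisymm (iSup_le fun i => ?_) (generateFrom_le ?_)
  · refine (@measurable_to_bool _ (generateFrom _) (fun η : ι → Bool => η i) ?_).comap_le
    exact measurableSet_generateFrom ⟨{i}, by ext; simp⟩
  · rintro _ ⟨F, rfl⟩
    exact measurableSet_allTrue F

lemma ext_of_allTrue {μ ν : Measure (ι → Bool)} [IsFiniteMeasure μ]
    (h : ∀ F : Finset ι, μ {η | ∀ i ∈ F, η i = true} = ν {η | ∀ i ∈ F, η i = true}) : μ = ν :=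
  ext_of_generate_finite _ pi_eq_generateFrom_allTrue isPiSystem_allTrue
    (by rintro _ ⟨F, rfl⟩; exact h F) (by simpa using h ∅)

lemma measurable_inf_bool : Measurable fun q : (ι → Bool) × (ι → Bool) => q.1 ⊓ q.2 :=
  measurable_pi_lambda _ fun i => (measurable_of_countable fun b : Bool × Bool => b.1 ⊓ b.2).comp
    (f := fun q : (ι → Bool) × (ι → Bool) => (q.1 i, q.2 i)) (by fun_prop)

lemma map_inf_prod_infinitePi_allTrue (μ : Measure (ι → Bool)) [SFinite μ] (β : Measure Bool)
    [IsProbabilityMeasure β] (F : Finset ι) :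
    (μ.prod (infinitePi fun _ => β)).map (fun q => q.1 ⊓ q.2) {η | ∀ i ∈ F, η i = true} =
      β {true} ^ F.card * μ {η | ∀ i ∈ F, η i = true} := by
  have hpre : (fun q : (ι → Bool) × (ι → Bool) => q.1 ⊓ q.2) ⁻¹' {η | ∀ i ∈ F, η i = true} =
      {η | ∀ i ∈ F, η i = true} ×ˢ Set.pi F fun _ => {true} := by
    ext q
    simp [forall_and]
  rw [map_apply measurable_inf_bool (measurableSet_allTrue F), hpre, prod_prod,
    infinitePi_pi _ fun _ _ => measurableSet_singleton true, Finset.prod_const, mul_comm]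

end BoolConfigurations

theorem minusEps_positive_correlations_general (μ : Measure (S → Bool)) [IsProbabilityMeasure μ]
    (hμ : PositiveCorrelations μ) (ε : ℝ) (hε : ε ∈ Set.Icc (0 : ℝ) 1)
    (ν : Measure (S → Bool)) (hν : IsMinusEps μ ν ε) :
    PositiveCorrelations ν := by
  classical
  let p : unitInterval := ⟨1 - ε, by constructor <;> linarith [hε.1, hε.2]⟩
  let π := infinitePi fun _ : S => bernoulliMeasure true false p
  have hνπ : (μ.prod π).map (fun q => q.1 ⊓ q.2) = ν := ext_of_allTrue fun F => by
    rw [map_inf_prod_infinitePi_allTrue, hν F,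
      bernoulliMeasure_apply_of_mem_of_notMem p (measurableSet_singleton _) rfl (by simp),
      ENNReal.ofReal_pow (by linarith [hε.2]), ← ENNReal.ofReal_coe_nnreal,
      unitInterval.coe_toNNReal]
  rw [← hνπ]
  exact (HasPositiveCorrelations.prod hμ (hasPositiveCorrelations_infinitePi fun _ =>
    hasPositiveCorrelations_bool _)).map measurable_inf_bool fun _ _ h => inf_le_inf h.1 h.2

theorem minusEps_positive_correlations (μ : Measure (S → Bool)) [IsProbabilityMeasure μ]
    (hμ : PositiveCorrelations μ) (ε : ℝ) (hε : ε ∈ Set.Icc (0 : ℝ) 1)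
    (ν : Measure (S → Bool)) [IsProbabilityMeasure ν] (hν : IsMinusEps μ ν ε) :
    PositiveCorrelations ν :=
  minusEps_positive_correlations_general μ hμ ε hε ν hν
end
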